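/- arXiv:2012.14122 — 2 statements merged into one kernel-verified Lean document; each statement's English description precedes it below -/
import Mathlib

section
/- For d ≥ 2, the equation (d+1)(1−t) + (1+dt)·log t = 0 has a unique root t* in the open interval (0,1). -/
open Real Set

theorem unique_root_tstar (d : ℕ) (hd : 2 ≤ d) :
    ∃! t : ℝ, t ∈ Set.Ioo (0 : ℝ) 1 ∧
      (d + 1 : ℝ) * (1 - t) + (1 + d * t) * Real.log t = 0 := by
  set D : ℝ := (d : ℝ) with hDdef
  have hD2 : (2:ℝ) ≤ D := by rw [hDdef]; exact_mod_cast hd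
  have hD0 : (0:ℝ) < D := by linarith
  set g : ℝ → ℝ := fun t => (D+1)*(1-t)/(1+D*t) + Real.log t with hg
  have hden : ∀ t : ℝ, 0 < t → 0 < 1 + D * t := by
    intro t ht; nlinarith
  set c : ℝ := 1 / D^2 with hc
  have hc0 : 0 < c := by positivity
  have hc1 : c < 1 := by
    rw [hc, div_lt_one (by positivity)]; nlinarith
  -- derivative of g
  have hderiv : ∀ t : ℝ, 0 < t →
      HasDerivAt g ((D^2*t - 1)*(t-1) / (t * (1+D*t)^2)) t := by
    intro t ht
    have hdt : (1 + D*t) ≠ 0 := ne_of_gt (hden t ht)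
    have h1 : HasDerivAt (fun s : ℝ => (D+1)*(1-s)) (-(D+1)) t := by
      simpa using ((hasDerivAt_id t).const_sub 1).const_mul (D+1)
    have h2 : HasDerivAt (fun s : ℝ => 1 + D*s) D t := by
      simpa using ((hasDerivAt_id t).const_mul D).const_add 1
    have h4 := (h1.div h2 hdt).add (Real.hasDerivAt_log (ne_of_gt ht))
    convert h4 using 1
    · rfl
    · rfl
    · rfl
    have hfs : ∀ D t : ℝ, 0 < t → 1 + D*t ≠ 0 → (D ^ 2 * t - 1) * (t - 1) / (t * (1 + D * t) ^ 2) =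
        (-(D + 1) * (1 + D * t) - (D + 1) * (1 - t) * D) / (1 + D * t) ^ 2 + t⁻¹ := by
      intro D t ht hdt
      have ht' : t ≠ 0 := ne_of_gt ht
      field_simp
      ring
    exact hfs D t ht hdt
  -- continuity of g on (0,∞)
  have hcont : ContinuousOn g (Ioi (0:ℝ)) := by
    apply ContinuousOn.add
    · apply ContinuousOn.div
      · fun_prop
      · fun_prop
      · intro x hx; exact ne_of_gt (hden x hx)
    · exact Real.continuousOn_log.mono (fun x hx => ne_of_gt hx)
  -- strict monotonicity on (0, c]
  have hmono : StrictMonoOn g (Ioc 0 c) := by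
    apply strictMonoOn_of_deriv_pos (convex_Ioc 0 c)
      (hcont.mono (fun x hx => hx.1))
    intro x hx
    rw [interior_Ioc] at hx
    rw [(hderiv x hx.1).deriv]
    have hx1 : x < 1 := lt_trans hx.2 hc1
    have hxc : D^2 * x < 1 := by
      have := hx.2
      rw [hc, lt_div_iff₀ (by positivity)] at this
      linarith
    apply div_pos
    · nlinarith
    · exact mul_pos hx.1 (pow_pos (hden x hx.1) 2)
  -- strict antitonicity on [c, 1]
  have hanti : StrictAntiOn g (Icc c 1) := by
    apply strictAntiOn_of_deriv_neg (convex_Icc c 1)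
      (hcont.mono (fun x hx => lt_of_lt_of_le hc0 hx.1))
    intro x hx
    rw [interior_Icc] at hx
    have hx0 : 0 < x := lt_trans hc0 hx.1
    rw [(hderiv x hx0).deriv]
    have hxc : 1 < D^2 * x := by
      have := hx.1
      rw [hc, div_lt_iff₀ (by positivity)] at this
      linarith
    apply div_neg_of_neg_of_pos
    · nlinarith [hx.2]
    · exact mul_pos hx0 (pow_pos (hden x hx0) 2)
  have hg1 : g 1 = 0 := by
    rw [hg]; simp
  have hgpos : ∀ x ∈ Ico c 1, 0 < g x := by
    intro x hx
    have := hanti ⟨hx.1, le_of_lt hx.2⟩ ⟨le_trans hx.1 (le_of_lt hx.2), le_refl 1⟩ hx.2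
    rwa [hg1] at this
  -- the point t0 where g < 0
  set t0 : ℝ := Real.exp (-(D+1)) with ht0
  have ht00 : 0 < t0 := Real.exp_pos _
  have hlogt0 : Real.log t0 = -(D+1) := Real.log_exp _
  have ht0c : t0 < c := by
    rw [hc, ht0]
    have hsq : Real.sqrt D ^ 2 = D := Real.sq_sqrt hD0.le
    have hs0 : 0 < Real.sqrt D := Real.sqrt_pos.mpr hD0
    have hlogD : Real.log D = 2 * Real.log (Real.sqrt D) := by
      rw [← hsq, Real.log_pow]; norm_num
    have hls : Real.log (Real.sqrt D) ≤ Real.sqrt D - 1 :=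
      Real.log_le_sub_one_of_pos hs0
    have hkey : 2 * Real.log D < D + 1 := by
      nlinarith [sq_nonneg (Real.sqrt D - 2)]
    have : Real.exp (-(D+1)) < Real.exp (Real.log (1/D^2)) := by
      apply Real.exp_lt_exp.mpr
      rw [Real.log_div one_ne_zero (by positivity), Real.log_one, Real.log_pow]
      push_cast
      linarith
    rwa [Real.exp_log (by positivity)] at this
  have hgt0 : g t0 < 0 := by
    rw [hg]
    simp only
    rw [hlogt0]
    have h := hden t0 ht00
    have hlt : (D+1)*(1-t0)/(1+D*t0) < D+1 := by
      rw [div_lt_iff₀ h]; nlinarith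
    linarith
  have hgc : 0 < g c := hgpos c ⟨le_refl c, hc1⟩
  -- IVT
  obtain ⟨x, hxmem, hgx⟩ :=
    intermediate_value_Ioo (le_of_lt ht0c)
      (hcont.mono (fun y hy => lt_of_lt_of_le ht00 hy.1))
      (Set.mem_Ioo.mpr ⟨hgt0, hgc⟩)
  have hx0 : 0 < x := lt_trans ht00 hxmem.1
  have hxc : x < c := hxmem.2
  have hx1 : x < 1 := lt_trans hxc hc1
  -- φ = 0 ↔ g = 0
  have key : ∀ y : ℝ, 0 < y →
      ((D + 1) * (1 - y) + (1 + D * y) * Real.log y = 0 ↔ g y = 0) := by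
    intro y hy
    have h := hden y hy
    have hgy : g y = ((D+1)*(1-y) + (1+D*y)*Real.log y) / (1+D*y) := by
      rw [hg]; field_simp
    rw [hgy, div_eq_zero_iff]
    constructor
    · intro h'; left; exact h'
    · rintro (h' | h')
      · exact h'
      · exact absurd h' (ne_of_gt h)
  refine ⟨x, ⟨⟨hx0, hx1⟩, (key x hx0).mpr hgx⟩, ?_⟩
  rintro y ⟨⟨hy0, hy1⟩, hyeq⟩
  have hgy : g y = 0 := (key y hy0).mp hyeq
  have hyc : y ≤ c := by
    by_contra hyc
    push_neg at hyc
    have := hgpos y ⟨le_of_lt hyc, hy1⟩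
    linarith
  exact hmono.injOn ⟨hy0, hyc⟩ ⟨hx0, le_of_lt hxc⟩ (by rw [hgy, hgx])
end

section
/- Key deterministic inequality for the Kolmogorov metric: if F and G are distribution functions on ℝ, G is continuous, and c_0 < c_1 < ... < c_m are points with G(c_0) = 0, G(c_m) = 1, and G(c_{i+1}) − G(c_i) = 1/m for all i, then sup_{x ∈ ℝ} |F(x) − G(x)| ≤ Σ_{j=1}^m |F(c_j) − G(c_j)| + 1/m. -/
open Real Set Finset

theorem kolmogorov_partition_bound (F G : ℝ → ℝ)
    (hFmono : Monotone F) (hF01 : ∀ x, F x ∈ Set.Icc (0 : ℝ) 1)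
    (hGmono : Monotone G) (hG01 : ∀ x, G x ∈ Set.Icc (0 : ℝ) 1)
    (hGcont : Continuous G)
    (m : ℕ) (hm : 0 < m) (c : ℕ → ℝ)
    (hcmono : StrictMonoOn c (Set.Iic m))
    (h0 : G (c 0) = 0) (hm1 : G (c m) = 1)
    (hstep : ∀ i < m, G (c (i + 1)) - G (c i) = 1 / m) :
    ∀ x : ℝ, |F x - G x| ≤ (∑ j ∈ Finset.Icc 1 m, |F (c j) - G (c j)|) + 1 / m := by
  intro x
  classical
  have hmR : (0:ℝ) < 1 / m := by positivity
  have hsum_nonneg : 0 ≤ ∑ j ∈ Finset.Icc 1 m, |F (c j) - G (c j)| :=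
    Finset.sum_nonneg fun j _ => abs_nonneg _
  have hterm : ∀ j, 1 ≤ j → j ≤ m →
      |F (c j) - G (c j)| ≤ ∑ j ∈ Finset.Icc 1 m, |F (c j) - G (c j)| := fun j h1 h2 =>
    Finset.single_le_sum (f := fun j => |F (c j) - G (c j)|) (fun i _ => abs_nonneg _) (Finset.mem_Icc.mpr ⟨h1, h2⟩)
  rw [abs_sub_le_iff]
  by_cases hxm : c m ≤ x
  · have hGx1 : G x = 1 := le_antisymm (hG01 x).2 (hm1 ▸ hGmono hxm)
    constructor
    · have := (hF01 x).2
      linarith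
    · have h1 : F (c m) ≤ F x := hFmono hxm
      have h2 : 1 - F (c m) ≤ |F (c m) - G (c m)| := by
        rw [abs_sub_comm]
        calc 1 - F (c m) = G (c m) - F (c m) := by rw [hm1]
          _ ≤ |G (c m) - F (c m)| := le_abs_self _
      have h3 := hterm m hm le_rfl
      linarith
  · push_neg at hxm
    by_cases hx0 : x < c 0
    · have hGx : G x = 0 := le_antisymm (h0 ▸ hGmono hx0.le) (hG01 x).1
      have hc01 : c 0 < c 1 := hcmono (Set.mem_Iic.mpr (Nat.zero_le m))
        (Set.mem_Iic.mpr hm) Nat.zero_lt_one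
      have hF1 : F x ≤ F (c 1) := hFmono (hx0.trans hc01).le
      have hG1 : G (c 1) = 1 / m := by
        have := hstep 0 hm; rw [h0] at this; linarith
      constructor
      · have h3 := hterm 1 le_rfl hm
        have h4 : F (c 1) - G (c 1) ≤ |F (c 1) - G (c 1)| := le_abs_self _
        linarith
      · have := (hF01 x).1
        linarith
    · push_neg at hx0
      set i := Nat.findGreatest (fun k => c k ≤ x) m with hi
      have hiP : c i ≤ x := Nat.findGreatest_spec (P := fun k => c k ≤ x) (Nat.zero_le m) hx0
      have him : i ≤ m := Nat.findGreatest_le m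
      have hilt : i < m := by
        rcases eq_or_lt_of_le him with h | h
        · rw [h] at hiP; exact absurd hiP (not_le.mpr hxm)
        · exact h
      have hnext : x < c (i + 1) := by
        by_contra h
        push_neg at h
        exact Nat.findGreatest_is_greatest (Nat.lt_succ_self i) hilt h
      have hstepi := hstep i hilt
      constructor
      · have h1 : F x ≤ F (c (i + 1)) := hFmono hnext.le
        have h2 : G (c i) ≤ G x := hGmono hiP
        have h3 := hterm (i + 1) (Nat.succ_le_succ (Nat.zero_le i)) hilt
        have h4 : F (c (i + 1)) - G (c (i + 1)) ≤ |F (c (i + 1)) - G (c (i + 1))| :=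
          le_abs_self _
        linarith
      · have h1 : F (c i) ≤ F x := hFmono hiP
        have h2 : G x ≤ G (c (i + 1)) := hGmono hnext.le
        rcases Nat.eq_zero_or_pos i with h | h
        · rw [h] at hstepi h1 h2
          have := (hF01 (c 0)).1
          linarith
        · have h3 := hterm i h hilt.le
          have h4 : G (c i) - F (c i) ≤ |F (c i) - G (c i)| := by
            rw [abs_sub_comm]; exact le_abs_self _
          linarith
end
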